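/- arXiv:2212.03841 — 2 statements merged into one kernel-verified Lean document; each statement's English description precedes it below -/
import Mathlib

section
/- Let Ω ⊂ ℝⁿ be a bounded domain with Lipschitz boundary, F ∈ (L²(Ω))ⁿ, H ∈ L²(Ω), and let φ: Ω × ℝⁿ → ℝ be continuous, convex and positively homogeneous of degree 1 in the second argument, satisfying (C1) 0 ≤ φ(x,ξ) ≤ α|ξ| and (C2) ξ ↦ φ(x,ξ) is a norm for every x. Let N ∈ D₀ with φ⁰(x,N) ≤ 1 a.e. be a solution of the dual problem, i.e. inf_{u ∈ H̊¹(Ω)} ∫_Ω (φ(x, Du+F) + Hu) dx = ⟨F,N⟩. Then for every minimizer u ∈ H̊¹(Ω) of the primal problem, φ(x, (Du+F)/|Du+F|) = N · (Du+F)/|Du+F| holds |Du+F|-almost everywhere in Ω. -/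
open MeasureTheory Metric Set Filter
open scoped ENNReal NNReal RealInnerProductSpace Topology BigOperators

noncomputable section

abbrev Euc (n : ℕ) := EuclideanSpace ℝ (Fin n)

/-- Divergence `∇·Y` of a vector field on `ℝⁿ`. -/
def divergence {n : ℕ} (Y : Euc n → Euc n) (x : Euc n) : ℝ :=
  ∑ i, ⟪fderiv ℝ Y x (EuclideanSpace.single i (1:ℝ)), EuclideanSpace.single i (1:ℝ)⟫

/-- Condition (C2) together with continuity, convexity and 1-homogeneity of the integrand:
`ξ ↦ φ x ξ` is a norm for every `x`, and `φ` is jointly continuous. -/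
structure IsFinslerNorm {n : ℕ} (φ : Euc n → Euc n → ℝ) : Prop where
  continuous : Continuous fun p : Euc n × Euc n => φ p.1 p.2
  nonneg : ∀ x ξ, 0 ≤ φ x ξ
  eq_zero_iff : ∀ x ξ, φ x ξ = 0 ↔ ξ = 0
  triangle : ∀ x ξ η, φ x (ξ + η) ≤ φ x ξ + φ x η
  smul : ∀ x (c : ℝ) ξ, φ x (c • ξ) = |c| * φ x ξ

/-- The dual norm `φ⁰(x,ξ) = sup { ξ·p : φ(x,p) ≤ 1 }`. -/
def dualNorm {n : ℕ} (φ : Euc n → Euc n → ℝ) (x ξ : Euc n) : ℝ :=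
  sSup {r | ∃ p : Euc n, φ x p ≤ 1 ∧ r = ⟪ξ, p⟫}

/-- Smooth vector fields compactly supported in `Ω`. -/
def TestField {n : ℕ} (Ω : Set (Euc n)) (Y : Euc n → Euc n) : Prop :=
  ContDiff ℝ (⊤ : ℕ∞) Y ∧ HasCompactSupport Y ∧ tsupport Y ⊆ Ω

/-- The set of values whose supremum defines `∫_Ω φ(x, Du + G)` by duality. -/
def phiTVSet {n : ℕ} (φ : Euc n → Euc n → ℝ) (Ω : Set (Euc n)) (G : Euc n → Euc n)
    (u : Euc n → ℝ) : Set ℝ :=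
  {r | ∃ Y : Euc n → Euc n, TestField Ω Y ∧ (∀ x, dualNorm φ x (Y x) ≤ 1) ∧
      r = ∫ x in Ω, (u x * divergence Y x - ⟪Y x, G x⟫)}

/-- `∫_Ω φ(x, Du + G)`, defined by duality. -/
def phiTV {n : ℕ} (φ : Euc n → Euc n → ℝ) (Ω : Set (Euc n)) (G : Euc n → Euc n)
    (u : Euc n → ℝ) : ℝ :=
  sSup (phiTVSet φ Ω G u)

/-- Values defining the euclidean total variation `∫_Ω |Du|`. -/
def tvSet {n : ℕ} (Ω : Set (Euc n)) (u : Euc n → ℝ) : Set ℝ :=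
  {r | ∃ Y : Euc n → Euc n, TestField Ω Y ∧ (∀ x, ‖Y x‖ ≤ 1) ∧
      r = ∫ x in Ω, u x * divergence Y x}

/-- `u ∈ BV(Ω)`. -/
def IsBVOn {n : ℕ} (u : Euc n → ℝ) (Ω : Set (Euc n)) : Prop :=
  IntegrableOn u Ω volume ∧ BddAbove (tvSet Ω u)

/-- `Ω` has Lipschitz boundary: near every boundary point, `Ω` is (in a suitable direction)
the open epigraph of a Lipschitz function. -/
def LipschitzDomain {n : ℕ} (Ω : Set (Euc n)) : Prop :=
  ∀ x ∈ frontier Ω, ∃ (v : Euc n) (r L : ℝ) (g : Euc n → ℝ),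
    ‖v‖ = 1 ∧ 0 < r ∧ 0 ≤ L ∧ LipschitzWith (Real.toNNReal L) g ∧
    ∀ y ∈ ball x r, (y ∈ Ω ↔ g (y - ⟪y, v⟫ • v) < ⟪y, v⟫)

/-- `g` is the weak (distributional) gradient of `u` on `Ω`. -/
def HasWeakGradOn {n : ℕ} (u : Euc n → ℝ) (g : Euc n → Euc n) (Ω : Set (Euc n)) : Prop :=
  ∀ Y : Euc n → Euc n, TestField Ω Y →
    ∫ x in Ω, u x * divergence Y x = - ∫ x in Ω, ⟪g x, Y x⟫

/-- `u ∈ H¹(Ω)` with weak gradient `g`. -/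
def MemH1 {n : ℕ} (Ω : Set (Euc n)) (u : Euc n → ℝ) (g : Euc n → Euc n) : Prop :=
  MemLp u 2 (volume.restrict Ω) ∧ MemLp g 2 (volume.restrict Ω) ∧ HasWeakGradOn u g Ω

/-- `u ∈ H¹₀(Ω)` with weak gradient `g`: a member of `H¹(Ω)` approximable in `H¹` norm by
smooth functions compactly supported in `Ω`. -/
def MemH10 {n : ℕ} (Ω : Set (Euc n)) (u : Euc n → ℝ) (g : Euc n → Euc n) : Prop :=
  MemH1 Ω u g ∧ ∃ v : ℕ → Euc n → ℝ,
    (∀ k, ContDiff ℝ (⊤ : ℕ∞) (v k) ∧ HasCompactSupport (v k) ∧ tsupport (v k) ⊆ Ω) ∧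
    Tendsto (fun k => eLpNorm (fun x => u x - v k x) 2 (volume.restrict Ω)
      + eLpNorm (fun x => g x - gradient (v k) x) 2 (volume.restrict Ω)) atTop (𝓝 0)

/-- `b ∈ D₀`: `∫_Ω (∇u·b + Hu) = 0` for all `u ∈ H̊¹(Ω)`. -/
def MemD0 {n : ℕ} (Ω : Set (Euc n)) (H : Euc n → ℝ) (b : Euc n → Euc n) : Prop :=
  MemLp b 2 (volume.restrict Ω) ∧
  ∀ u g, MemH1 Ω u g → (∫ x in Ω, u x) = 0 →
    ∫ x in Ω, (⟪g x, b x⟫ + H x * u x) = 0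

/-- `b ∈ D̃₀`: `∫_Ω (∇u·b + Hu) = 0` for all `u ∈ H¹₀(Ω)`. -/
def MemD0' {n : ℕ} (Ω : Set (Euc n)) (H : Euc n → ℝ) (b : Euc n → Euc n) : Prop :=
  MemLp b 2 (volume.restrict Ω) ∧
  ∀ u g, MemH10 Ω u g → ∫ x in Ω, (⟪g x, b x⟫ + H x * u x) = 0

/-- The surface measure: `(n-1)`-dimensional Hausdorff measure. -/
def surfMeasure (n : ℕ) : Measure (Euc n) := μH[(n : ℝ) - 1]

/-- Values of the primal Neumann problem over `H̊¹(Ω)`. -/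
def primalValues0 {n : ℕ} (φ : Euc n → Euc n → ℝ) (Ω : Set (Euc n)) (F : Euc n → Euc n)
    (H : Euc n → ℝ) : Set ℝ :=
  {r | ∃ u g, MemH1 Ω u g ∧ (∫ x in Ω, u x) = 0 ∧
      r = ∫ x in Ω, (φ x (g x + F x) + H x * u x)}

/-- Values of the primal Dirichlet problem over `H¹₀(Ω)`. -/
def primalValues10 {n : ℕ} (φ : Euc n → Euc n → ℝ) (Ω : Set (Euc n)) (F : Euc n → Euc n)
    (H : Euc n → ℝ) : Set ℝ :=
  {r | ∃ u g, MemH10 Ω u g ∧ r = ∫ x in Ω, (φ x (g x + F x) + H x * u x)}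

/-- `u ∈ A₀ = {u ∈ H¹(ℝⁿ) : u = 0 in Ωᶜ}`, with weak gradient `g`. -/
def MemA0 {n : ℕ} (Ω : Set (Euc n)) (u : Euc n → ℝ) (g : Euc n → Euc n) : Prop :=
  MemLp u 2 volume ∧ MemLp g 2 volume ∧ HasWeakGradOn u g univ ∧
    ∀ᵐ x ∂volume, x ∉ Ω → u x = 0

/-- `ν` is the outer unit normal of `Ω`, characterized by the Gauss–Green formula. -/
def IsOuterNormal {n : ℕ} (Ω : Set (Euc n)) (ν : Euc n → Euc n) : Prop :=
  (∀ x ∈ frontier Ω, ‖ν x‖ = 1) ∧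
  ∀ Y : Euc n → Euc n, ContDiff ℝ (⊤ : ℕ∞) Y →
    ∫ x in Ω, divergence Y x = ∫ x in frontier Ω, ⟪Y x, ν x⟫ ∂(surfMeasure n)

/-- `t` is the inner trace of `u` on `∂Ω`: for `H^{n-1}`-a.e. boundary point, `t x` is the
limit of the averages of `u` over `Ω ∩ B(x,r)`. -/
def InnerTraceFun {n : ℕ} (Ω : Set (Euc n)) (u t : Euc n → ℝ) : Prop :=
  ∀ᵐ x ∂((surfMeasure n).restrict (frontier Ω)),
    Tendsto (fun r : ℝ => ⨍ y in Ω ∩ ball x r, u y) (𝓝[>] 0) (𝓝 (t x))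

/-- `t` is the outer trace of `u` on `∂Ω`. -/
def OuterTraceFun {n : ℕ} (Ω : Set (Euc n)) (u t : Euc n → ℝ) : Prop :=
  ∀ᵐ x ∂((surfMeasure n).restrict (frontier Ω)),
    Tendsto (fun r : ℝ => ⨍ y in ball x r \ closure Ω, u y) (𝓝[>] 0) (𝓝 (t x))

/-- The value of the relaxed functional
`∫_Ω (φ(x,Du+F)+Hu) dx + ∫_{∂Ω} φ(x,ν_Ω)|u| ds` at `u ∈ A₀` (with weak gradient `g`),
`tr u` denoting the inner trace of `u` on `∂Ω`. -/
def relaxedVal {n : ℕ} (φ : Euc n → Euc n → ℝ) (Ω : Set (Euc n)) (F : Euc n → Euc n)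
    (H : Euc n → ℝ) (ν : Euc n → Euc n) (tr : (Euc n → ℝ) → Euc n → ℝ)
    (u : Euc n → ℝ) (g : Euc n → Euc n) : ℝ :=
  (∫ x in Ω, (φ x (g x + F x) + H x * u x)) +
    ∫ x in frontier Ω, φ x (ν x) * |tr u x| ∂(surfMeasure n)

/-- Values of the relaxed problem over `A₀`. -/
def relaxedValues {n : ℕ} (φ : Euc n → Euc n → ℝ) (Ω : Set (Euc n)) (F : Euc n → Euc n)
    (H : Euc n → ℝ) (ν : Euc n → Euc n) (tr : (Euc n → ℝ) → Euc n → ℝ) : Set ℝ :=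
  {r | ∃ u g, MemA0 Ω u g ∧ r = relaxedVal φ Ω F H ν tr u g}

/-- Values of the Dirichlet problem over `BV₀(Ω)` (zero trace on `∂Ω`). -/
def dirichletValues {n : ℕ} (φ : Euc n → Euc n → ℝ) (Ω : Set (Euc n)) (F : Euc n → Euc n)
    (H : Euc n → ℝ) : Set ℝ :=
  {r | ∃ u, IsBVOn u Ω ∧ InnerTraceFun Ω u (fun _ => 0) ∧
      r = phiTV φ Ω F u + ∫ x in Ω, H x * u x}

/-- The energy `∫_Ω ψ(x,u) = ∫_Ω (φ(x, Du + F χ_{E_u}) + Hu)`, where `E_u` is the closure of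
the support of `u` in `Ω`. -/
def psiEnergy {n : ℕ} (φ : Euc n → Euc n → ℝ) (Ω : Set (Euc n)) (F : Euc n → Euc n)
    (H : Euc n → ℝ) (u : Euc n → ℝ) : ℝ :=
  phiTV φ Ω ((Ω ∩ closure (Function.support u)).indicator F) u + ∫ x in Ω, H x * u x

/-- `u` is `ψ`-total variation minimizing in `Ω`. -/
def PsiTVMinimizing {n : ℕ} (φ : Euc n → Euc n → ℝ) (Ω : Set (Euc n)) (F : Euc n → Euc n)
    (H : Euc n → ℝ) (u : Euc n → ℝ) : Prop :=
  ∀ v : Euc n → ℝ, IsBVOn v univ → u =ᵐ[volume.restrict Ωᶜ] v →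
    psiEnergy φ Ω F H u ≤ psiEnergy φ Ω F H v

/-- The `ψ`-perimeter `P_ψ(E;A) = ∫_A (φ(x, Dχ_E + F χ_E) + H χ_E)`. -/
def psiPerimeter {n : ℕ} (φ : Euc n → Euc n → ℝ) (A : Set (Euc n)) (F : Euc n → Euc n)
    (H : Euc n → ℝ) (E : Set (Euc n)) : ℝ :=
  phiTV φ A (E.indicator F) (E.indicator fun _ => (1:ℝ)) +
    ∫ x in A, H x * E.indicator (fun _ => (1:ℝ)) x

/-- `E` has finite perimeter in `ℝⁿ`. -/
def HasFinitePerimeter {n : ℕ} (E : Set (Euc n)) : Prop :=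
  BddAbove (tvSet univ (E.indicator fun _ => (1:ℝ)))

/-- `E` is `ψ`-area minimizing in `Ω`. -/
def PsiAreaMinimizing {n : ℕ} (φ : Euc n → Euc n → ℝ) (Ω : Set (Euc n)) (F : Euc n → Euc n)
    (H : Euc n → ℝ) (E : Set (Euc n)) : Prop :=
  HasFinitePerimeter E ∧ ∀ E' : Set (Euc n), HasFinitePerimeter E' →
    volume (((E' \ E) ∪ (E \ E')) ∩ Ωᶜ) = 0 →
    psiPerimeter φ Ω F H E ≤ psiPerimeter φ Ω F H E'

/-- `E^{(1)}`: the set of points of density `1` of `E`. -/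
def densityOnePoints {n : ℕ} (E : Set (Euc n)) : Set (Euc n) :=
  {x | Tendsto (fun r : ℝ => volume (E ∩ ball x r) / volume (ball x r)) (𝓝[>] 0) (𝓝 1)}

/-- The barrier condition for `Ω` with respect to `ψ`. -/
def BarrierCondition {n : ℕ} (φ : Euc n → Euc n → ℝ) (Ω : Set (Euc n)) (F : Euc n → Euc n)
    (H : Euc n → ℝ) : Prop :=
  ∀ x₀ ∈ frontier Ω, ∃ ε₀ > (0:ℝ), ∀ ε : ℝ, 0 < ε → ε < ε₀ →
    ∀ V : Set (Euc n), V ⊆ Ω → V \ ball x₀ ε = Ω \ ball x₀ ε → HasFinitePerimeter V →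
      (∀ W : Set (Euc n), W ⊆ Ω → W \ ball x₀ ε = Ω \ ball x₀ ε → HasFinitePerimeter W →
        psiPerimeter φ univ F H V ≤ psiPerimeter φ univ F H W) →
      frontier (densityOnePoints V) ∩ frontier Ω ∩ ball x₀ ε = ∅

/-- `(μ, σ)` is the polar decomposition of the vector measure `Du + F dx` on `Ω`:
`μ = |Du + F|` and `σ = d(Du+F)/d|Du+F|`. -/
def RepresentsDuPlusF {n : ℕ} (Ω : Set (Euc n)) (F : Euc n → Euc n) (u : Euc n → ℝ)
    (μ : Measure (Euc n)) (σ : Euc n → Euc n) : Prop :=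
  IsFiniteMeasure μ ∧ μ Ωᶜ = 0 ∧ (∀ᵐ x ∂μ, ‖σ x‖ = 1) ∧
  ∀ Y : Euc n → Euc n, TestField Ω Y →
    ∫ x, ⟪Y x, σ x⟫ ∂μ = -(∫ x in Ω, u x * divergence Y x) + ∫ x in Ω, ⟪Y x, F x⟫

/-- `u` attains the boundary values `f` in the strong (essential-limit) sense:
`lim_{r→0} esssup_{y ∈ Ω, |x-y|<r} |u(y) - f(x)| = 0` for every `x ∈ ∂Ω`. -/
def AttainsBoundaryValues {n : ℕ} (Ω : Set (Euc n)) (u f : Euc n → ℝ) : Prop :=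
  ∀ x ∈ frontier Ω,
    Tendsto (fun r : ℝ =>
        essSup (fun y => (‖u y - f x‖₊ : ℝ≥0∞)) (volume.restrict (Ω ∩ ball x r)))
      (𝓝[>] 0) (𝓝 0)

end

lemma my_integrable_inner {α : Type*} [MeasurableSpace α] {μ : MeasureTheory.Measure α}
    {E : Type*} [NormedAddCommGroup E] [InnerProductSpace ℝ E]
    {f g : α → E} (hf : MeasureTheory.MemLp f 2 μ) (hg : MeasureTheory.MemLp g 2 μ) :
    MeasureTheory.Integrable (fun x => ⟪f x, g x⟫) μ := by
  have h := MeasureTheory.L2.integrable_inner (𝕜 := ℝ) (hf.toLp f) (hg.toLp g)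
  refine h.congr ?_
  filter_upwards [hf.coeFn_toLp, hg.coeFn_toLp] with x h1 h2
  rw [h1, h2]

/-- Theorem 2.1, structure of minimizers: if `N` is a solution of the dual
problem, then for every minimizer `u ∈ H̊¹(Ω)` of the primal problem one has
`φ(x, (Du+F)/|Du+F|) = N · (Du+F)/|Du+F|`, `|Du+F|`-a.e. in `Ω` (for `u ∈ H¹` the measure
`|Du+F|` is `‖∇u + F‖ dx`, so this reads pointwise a.e. on `{∇u + F ≠ 0}`). -/
theorem statement2 {n : ℕ} (Ω : Set (Euc n)) (hΩo : IsOpen Ω) (hΩc : IsConnected Ω)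
    (hΩb : Bornology.IsBounded Ω) (hΩl : LipschitzDomain Ω)
    (F : Euc n → Euc n) (hF : MemLp F 2 (volume.restrict Ω))
    (H : Euc n → ℝ) (hH : MemLp H 2 (volume.restrict Ω))
    (φ : Euc n → Euc n → ℝ) (hφ : IsFinslerNorm φ)
    (α : ℝ) (hα : 0 < α) (hC1 : ∀ x ξ, φ x ξ ≤ α * ‖ξ‖)
    -- `N` solves the dual problem:
    (N : Euc n → Euc n) (hND : MemD0 Ω H N)
    (hNfeas : ∀ᵐ x ∂(volume.restrict Ω), dualNorm φ x (N x) ≤ 1)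
    (hNdual : sInf (primalValues0 φ Ω F H) = ∫ x in Ω, ⟪F x, N x⟫)
    -- `u` is a minimizer of the primal problem over `H̊¹(Ω)`:
    (u : Euc n → ℝ) (g : Euc n → Euc n) (hu : MemH1 Ω u g) (hu0 : (∫ x in Ω, u x) = 0)
    (hmin : ∀ r ∈ primalValues0 φ Ω F H,
      (∫ x in Ω, (φ x (g x + F x) + H x * u x)) ≤ r) :
    ∀ᵐ x ∂(volume.restrict Ω), g x + F x ≠ 0 →
      φ x ((‖g x + F x‖)⁻¹ • (g x + F x)) =
        ⟪N x, (‖g x + F x‖)⁻¹ • (g x + F x)⟫ := by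
  classical
  obtain ⟨hu2, hg2, hwg⟩ := hu
  have hμ : IsFiniteMeasure (volume.restrict Ω) := by
    constructor
    rw [Measure.restrict_apply_univ]
    exact hΩb.measure_lt_top
  have hsum : MemLp (fun x => g x + F x) 2 (volume.restrict Ω) := hg2.add hF
  -- integrability of the pieces
  have hint_phi : Integrable (fun x => φ x (g x + F x)) (volume.restrict Ω) := by
    have hmeas : AEStronglyMeasurable (fun x => φ x (g x + F x)) (volume.restrict Ω) :=
      hφ.continuous.comp_aestronglyMeasurable
        (aestronglyMeasurable_id.prodMk hsum.aestronglyMeasurable)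
    have hbound : Integrable (fun x => α * ‖g x + F x‖) (volume.restrict Ω) :=
      (hsum.integrable one_le_two).norm.const_mul α
    refine hbound.mono' hmeas (ae_of_all _ fun x => ?_)
    rw [Real.norm_eq_abs, abs_of_nonneg (hφ.nonneg _ _)]
    exact hC1 _ _
  have hint_Hu : Integrable (fun x => H x * u x) (volume.restrict Ω) := by
    simpa [mul_comm] using my_integrable_inner hH hu2
  have hint_gN : Integrable (fun x => ⟪g x, N x⟫) (volume.restrict Ω) :=
    my_integrable_inner hg2 hND.1
  have hint_FN : Integrable (fun x => ⟪F x, N x⟫) (volume.restrict Ω) :=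
    my_integrable_inner hF hND.1
  have hint_sumN : Integrable (fun x => ⟪g x + F x, N x⟫) (volume.restrict Ω) :=
    my_integrable_inner hsum hND.1
  -- the primal value of u equals the dual value
  have hImem : (∫ x in Ω, (φ x (g x + F x) + H x * u x)) ∈ primalValues0 φ Ω F H :=
    ⟨u, g, ⟨hu2, hg2, hwg⟩, hu0, rfl⟩
  have hIval : (∫ x in Ω, (φ x (g x + F x) + H x * u x)) = ∫ x in Ω, ⟪F x, N x⟫ := by
    have h1 : (∫ x in Ω, (φ x (g x + F x) + H x * u x)) ≤ sInf (primalValues0 φ Ω F H) :=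
      le_csInf ⟨_, hImem⟩ hmin
    have h2 : sInf (primalValues0 φ Ω F H) ≤ ∫ x in Ω, (φ x (g x + F x) + H x * u x) :=
      csInf_le ⟨_, hmin⟩ hImem
    rw [← hNdual]
    exact le_antisymm h1 h2
  have hD0 : ∫ x in Ω, (⟪g x, N x⟫ + H x * u x) = 0 := hND.2 u g ⟨hu2, hg2, hwg⟩ hu0
  -- key identity : ∫ (φ(x,g+F) - ⟪g+F,N⟫) = 0
  have hkey : ∫ x in Ω, (φ x (g x + F x) - ⟪g x + F x, N x⟫) = 0 := by
    rw [integral_sub hint_phi hint_sumN]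
    have e1 : (∫ x in Ω, (φ x (g x + F x) + H x * u x))
        = (∫ x in Ω, φ x (g x + F x)) + ∫ x in Ω, H x * u x :=
      integral_add hint_phi hint_Hu
    have e2 : (∫ x in Ω, (⟪g x, N x⟫ + H x * u x))
        = (∫ x in Ω, ⟪g x, N x⟫) + ∫ x in Ω, H x * u x :=
      integral_add hint_gN hint_Hu
    have e3 : (fun x => ⟪g x + F x, N x⟫) = fun x => ⟪g x, N x⟫ + ⟪F x, N x⟫ := by
      funext x; exact inner_add_left _ _ _
    have e4 : (∫ x in Ω, ⟪g x + F x, N x⟫)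
        = (∫ x in Ω, ⟪g x, N x⟫) + ∫ x in Ω, ⟪F x, N x⟫ := by
      rw [e3]; exact integral_add hint_gN hint_FN
    rw [e4]
    rw [e1] at hIval
    rw [e2] at hD0
    linarith
  -- pointwise inequality from dual feasibility
  have hpt : ∀ᵐ x ∂(volume.restrict Ω), ∀ ξ : Euc n, ⟪N x, ξ⟫ ≤ φ x ξ := by
    filter_upwards [hNfeas] with x hx ξ
    by_cases hξ : ξ = 0
    · rw [hξ]
      simpa using le_of_eq ((hφ.eq_zero_iff x 0).mpr rfl).symm
    · have hc : 0 < φ x ξ :=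
        lt_of_le_of_ne (hφ.nonneg x ξ) fun h => hξ ((hφ.eq_zero_iff x ξ).1 h.symm)
      have hp : φ x ((φ x ξ)⁻¹ • ξ) ≤ 1 := by
        rw [hφ.smul, abs_of_pos (inv_pos.2 hc), inv_mul_cancel₀ hc.ne']
      have : Nontrivial (Euc n) := nontrivial_of_ne ξ 0 hξ
      -- lower bound for φ x on the sphere
      have hcont : Continuous fun p : Euc n => φ x p :=
        hφ.continuous.comp (continuous_const.prodMk continuous_id)
      obtain ⟨p₀, hp₀s, hmin'⟩ := (isCompact_sphere (0 : Euc n) 1).exists_isMinOn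
        (NormedSpace.sphere_nonempty.2 zero_le_one) hcont.continuousOn
      have hp₀norm : ‖p₀‖ = 1 := by simpa using mem_sphere_zero_iff_norm.1 hp₀s
      have hp₀ne : p₀ ≠ 0 := by
        intro h; rw [h, norm_zero] at hp₀norm; norm_num at hp₀norm
      have hm : 0 < φ x p₀ :=
        lt_of_le_of_ne (hφ.nonneg x p₀) fun h => hp₀ne ((hφ.eq_zero_iff x p₀).1 h.symm)
      have hbdd : BddAbove {r | ∃ p : Euc n, φ x p ≤ 1 ∧ r = ⟪N x, p⟫} := by
        refine ⟨‖N x‖ * (φ x p₀)⁻¹, ?_⟩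
        rintro r ⟨p, hp1, rfl⟩
        have hnorm : ‖p‖ ≤ (φ x p₀)⁻¹ := by
          by_cases hp0 : p = 0
          · rw [hp0, norm_zero]; positivity
          · have hmem : ‖p‖⁻¹ • p ∈ sphere (0 : Euc n) 1 :=
              mem_sphere_zero_iff_norm.2 (norm_smul_inv_norm (𝕜 := ℝ) hp0)
            have h1 : φ x p₀ ≤ φ x (‖p‖⁻¹ • p) := hmin' hmem
            rw [hφ.smul, abs_of_pos (inv_pos.2 (norm_pos_iff.2 hp0))] at h1
            have hpn : (0:ℝ) < ‖p‖ := norm_pos_iff.2 hp0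
            have h2 : ‖p‖ * φ x p₀ ≤ φ x p := by
              calc ‖p‖ * φ x p₀ ≤ ‖p‖ * (‖p‖⁻¹ * φ x p) :=
                    mul_le_mul_of_nonneg_left h1 hpn.le
                _ = φ x p := by field_simp
            calc ‖p‖ = ‖p‖ * φ x p₀ * (φ x p₀)⁻¹ := by field_simp
              _ ≤ 1 * (φ x p₀)⁻¹ :=
                  mul_le_mul_of_nonneg_right (h2.trans hp1) (inv_pos.2 hm).le
              _ = (φ x p₀)⁻¹ := one_mul _
        calc ⟪N x, p⟫ ≤ ‖N x‖ * ‖p‖ := real_inner_le_norm _ _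
          _ ≤ ‖N x‖ * (φ x p₀)⁻¹ := mul_le_mul_of_nonneg_left hnorm (norm_nonneg _)
      have hmem2 : ⟪N x, (φ x ξ)⁻¹ • ξ⟫ ∈
          {r | ∃ p : Euc n, φ x p ≤ 1 ∧ r = ⟪N x, p⟫} := ⟨_, hp, rfl⟩
      have hle : ⟪N x, (φ x ξ)⁻¹ • ξ⟫ ≤ 1 := (le_csSup hbdd hmem2).trans hx
      rw [real_inner_smul_right] at hle
      calc ⟪N x, ξ⟫ = φ x ξ * ((φ x ξ)⁻¹ * ⟪N x, ξ⟫) := by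
            field_simp
        _ ≤ φ x ξ * 1 := mul_le_mul_of_nonneg_left hle hc.le
        _ = φ x ξ := mul_one _
  -- equality a.e.
  have hnn : 0 ≤ᵐ[volume.restrict Ω]
      fun x => φ x (g x + F x) - ⟪g x + F x, N x⟫ := by
    filter_upwards [hpt] with x hx
    rw [real_inner_comm]
    exact sub_nonneg.2 (hx _)
  have hzero := (integral_eq_zero_iff_of_nonneg_ae hnn (hint_phi.sub hint_sumN)).1 hkey
  filter_upwards [hzero] with x hx hne
  have hxe : φ x (g x + F x) = ⟪N x, g x + F x⟫ := by
    have : φ x (g x + F x) - ⟪g x + F x, N x⟫ = 0 := hx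
    rw [real_inner_comm] at this
    linarith
  rw [hφ.smul, real_inner_smul_right, hxe,
    abs_of_pos (inv_pos.2 (norm_pos_iff.2 hne))]
end

section
/- Let Ω ⊂ ℝⁿ be a bounded open set with Lipschitz boundary, F ∈ (L²(Ω))ⁿ, H ∈ L^∞(Ω) with Poincaré constant C_Ω of Ω, and let φ satisfy (C1) 0 ≤ φ(x,ξ) ≤ α|ξ|, (C2) ξ ↦ φ(x,ξ) is a norm for every x, and (C3) β|ξ| ≤ φ(x,ξ). If β − C_Ω‖H‖_{L^∞(Ω)} > 0, then any sequence (u_n) ⊂ B̊V(Ω) along which the values I(u_n) = ∫_Ω φ(x, Du_n+F) + Hu_n are bounded above by a constant c has uniformly bounded total variation: ∫_Ω |Du_n| ≤ (c' + β∫_Ω |F|)/(β − C_Ω‖H‖_{L^∞(Ω)}) for a constant c' depending only on c. -/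
open MeasureTheory Metric Set Filter
open scoped ENNReal NNReal RealInnerProductSpace Topology BigOperators

section AuxLemmas

variable {n : ℕ}

lemma testField_zero (Ω : Set (Euc n)) : TestField Ω (fun _ => (0 : Euc n)) := by
  refine ⟨contDiff_const, ?_, ?_⟩
  · rw [HasCompactSupport, tsupport]
    simp
  · rw [tsupport]
    simp

lemma divergence_zero (x : Euc n) : divergence (fun _ => (0 : Euc n)) x = 0 := by
  unfold divergence
  simp [fderiv_const]

lemma divergence_smul (c : ℝ) {Y : Euc n → Euc n} (hY : Differentiable ℝ Y) (x : Euc n) :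
    divergence (fun y => c • Y y) x = c * divergence Y x := by
  unfold divergence
  rw [fderiv_fun_const_smul (hY x) c]
  simp [real_inner_smul_left, Finset.mul_sum]

lemma testField_smul (c : ℝ) {Ω : Set (Euc n)} {Y : Euc n → Euc n} (hY : TestField Ω Y) :
    TestField Ω (fun y => c • Y y) := by
  have hsupp : Function.support (fun y => c • Y y) ⊆ tsupport Y := fun y hy =>
    subset_closure (by
      intro h
      apply hy
      simp [Function.mem_support, h])
  exact ⟨hY.1.const_smul c, hY.2.1.mono' hsupp,
    (closure_minimal hsupp isClosed_closure).trans hY.2.2⟩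

lemma testField_bound {Ω : Set (Euc n)} {Y : Euc n → Euc n} (hY : TestField Ω Y) :
    ∃ C, ∀ x, ‖Y x‖ ≤ C :=
  hY.2.1.exists_bound_of_continuous hY.1.continuous

lemma divergence_continuous {Y : Euc n → Euc n} (hY : ContDiff ℝ (⊤ : ℕ∞) Y) :
    Continuous (divergence Y) := by
  have h1 : Continuous (fderiv ℝ Y) := hY.continuous_fderiv (by simp)
  unfold divergence
  exact continuous_finset_sum _ fun i _ =>
    (h1.clm_apply continuous_const).inner continuous_const

lemma divergence_support {Y : Euc n → Euc n} :
    Function.support (divergence Y) ⊆ tsupport Y := by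
  intro x hx
  by_contra h
  have hfd : fderiv ℝ Y x = 0 := by
    by_contra hfd
    exact h (support_fderiv_subset ℝ (Function.mem_support.mpr hfd))
  apply hx
  unfold divergence
  simp [hfd]

lemma divergence_bound {Ω : Set (Euc n)} {Y : Euc n → Euc n} (hY : TestField Ω Y) :
    ∃ C, ∀ x, |divergence Y x| ≤ C := by
  have hc : HasCompactSupport (divergence Y) := hY.2.1.mono' divergence_support
  obtain ⟨C, hC⟩ := hc.exists_bound_of_continuous (divergence_continuous hY.1)
  exact ⟨C, fun x => by simpa [Real.norm_eq_abs] using hC x⟩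

lemma dual_set_bdd {φ : Euc n → Euc n → ℝ} {β : ℝ} (hβ : 0 < β)
    (hC3 : ∀ x ξ, β * ‖ξ‖ ≤ φ x ξ) (x ξ : Euc n) :
    ∀ r ∈ {r | ∃ p : Euc n, φ x p ≤ 1 ∧ r = ⟪ξ, p⟫}, r ≤ ‖ξ‖ / β := by
  rintro r ⟨p, hp, rfl⟩
  have hpn : ‖p‖ ≤ 1 / β := by
    rw [le_div_iff₀ hβ]
    have := (hC3 x p).trans hp
    linarith
  calc ⟪ξ, p⟫ ≤ ‖ξ‖ * ‖p‖ := real_inner_le_norm ξ p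
    _ ≤ ‖ξ‖ * (1 / β) := by
        exact mul_le_mul_of_nonneg_left hpn (norm_nonneg _)
    _ = ‖ξ‖ / β := by ring

lemma dualNorm_le_norm_div {φ : Euc n → Euc n → ℝ} {β : ℝ} (hβ : 0 < β)
    (hC3 : ∀ x ξ, β * ‖ξ‖ ≤ φ x ξ) (x ξ : Euc n) :
    dualNorm φ x ξ ≤ ‖ξ‖ / β :=
  Real.sSup_le (dual_set_bdd hβ hC3 x ξ) (by positivity)

lemma norm_le_of_dualNorm_le_one {φ : Euc n → Euc n → ℝ} (hφ : IsFinslerNorm φ)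
    {α β : ℝ} (hα : 0 < α) (hβ : 0 < β)
    (hC1 : ∀ x ξ, φ x ξ ≤ α * ‖ξ‖) (hC3 : ∀ x ξ, β * ‖ξ‖ ≤ φ x ξ)
    (x ξ : Euc n) (h : dualNorm φ x ξ ≤ 1) : ‖ξ‖ ≤ α := by
  rcases eq_or_ne ξ 0 with rfl | hne
  · simpa using hα.le
  · have hξpos : 0 < ‖ξ‖ := norm_pos_iff.mpr hne
    set p := (α * ‖ξ‖)⁻¹ • ξ with hp
    have hφp : φ x p ≤ 1 := by
      rw [hp, hφ.smul, abs_of_pos (by positivity)]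
      calc (α * ‖ξ‖)⁻¹ * φ x ξ ≤ (α * ‖ξ‖)⁻¹ * (α * ‖ξ‖) :=
            mul_le_mul_of_nonneg_left (hC1 x ξ) (by positivity)
        _ = 1 := inv_mul_cancel₀ (by positivity)
    have hmem : ‖ξ‖ / α ∈ {r | ∃ p : Euc n, φ x p ≤ 1 ∧ r = ⟪ξ, p⟫} := by
      refine ⟨p, hφp, ?_⟩
      rw [hp, real_inner_smul_right, real_inner_self_eq_norm_mul_norm]
      field_simp
    have hbdd : BddAbove {r | ∃ p : Euc n, φ x p ≤ 1 ∧ r = ⟪ξ, p⟫} :=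
      ⟨‖ξ‖ / β, fun r hr => dual_set_bdd hβ hC3 x ξ r hr⟩
    have h1 : ‖ξ‖ / α ≤ 1 := (le_csSup hbdd hmem).trans h
    rw [div_le_one hα] at h1
    exact h1

end AuxLemmas

/-- a priori bound in the proof of Proposition 2.1: if
`β - C_Ω ‖H‖_{L^∞} > 0`, where `C_Ω` is the Poincaré constant of `Ω`, then any sequence in
`B̊V(Ω)` along which the energies `I(u_k)` are bounded above by `c` has uniformly bounded
total variation: `∫_Ω |Du_k| ≤ (c' + β ∫_Ω |F|)/(β - C_Ω ‖H‖_{L^∞})`. -/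
theorem statement4 {n : ℕ} (Ω : Set (Euc n)) (hΩo : IsOpen Ω) (hΩb : Bornology.IsBounded Ω)
    (hΩl : LipschitzDomain Ω)
    (F : Euc n → Euc n) (hF : MemLp F 2 (volume.restrict Ω))
    (H : Euc n → ℝ) (hH : MemLp H ⊤ (volume.restrict Ω))
    (M : ℝ) (hM : ∀ᵐ x ∂(volume.restrict Ω), |H x| ≤ M)
    (φ : Euc n → Euc n → ℝ) (hφ : IsFinslerNorm φ)
    (α : ℝ) (hα : 0 < α) (hC1 : ∀ x ξ, φ x ξ ≤ α * ‖ξ‖)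
    (β : ℝ) (hβ : 0 < β) (hC3 : ∀ x ξ, β * ‖ξ‖ ≤ φ x ξ)
    -- `C_Ω` is the Poincaré constant of `Ω`:
    (CΩ : ℝ) (hCΩ : 0 < CΩ)
    (hPoincare : ∀ u : Euc n → ℝ, IsBVOn u Ω → (∫ x in Ω, u x) = 0 →
      (∫ x in Ω, |u x|) ≤ CΩ * sSup (tvSet Ω u))
    (hpos : 0 < β - CΩ * M)
    (c : ℝ) (u : ℕ → Euc n → ℝ)
    (hu : ∀ k, IsBVOn (u k) Ω ∧ (∫ x in Ω, u k x) = 0)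
    (hbd : ∀ k, phiTV φ Ω F (u k) + ∫ x in Ω, H x * u k x ≤ c) :
    ∃ c' : ℝ, ∀ k, sSup (tvSet Ω (u k)) ≤
      (c' + β * ∫ x in Ω, ‖F x‖) / (β - CΩ * M) := by
  classical
  haveI hfin : IsFiniteMeasure (volume.restrict Ω) :=
    ⟨by rw [Measure.restrict_apply_univ]; exact hΩb.measure_lt_top⟩
  refine ⟨max c 0, fun k => ?_⟩
  obtain ⟨⟨huint, hubdd⟩, huzero⟩ := hu k
  have h0mem : (0 : ℝ) ∈ tvSet Ω (u k) := by
    refine ⟨fun _ => 0, testField_zero Ω, by simp, ?_⟩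
    simp [divergence_zero]
  set T := sSup (tvSet Ω (u k)) with hT
  have hT0 : 0 ≤ T := le_csSup hubdd h0mem
  by_cases hΩ0 : volume Ω = 0
  · -- degenerate case: `Ω` is null, all integrals vanish
    have hres : volume.restrict Ω = 0 := Measure.restrict_eq_zero.mpr hΩ0
    have hTset : tvSet Ω (u k) = {0} := by
      apply Subset.antisymm
      · rintro r ⟨Y, hY, hYn, rfl⟩
        simp [hres]
      · rintro r hr
        rw [Set.mem_singleton_iff] at hr
        subst hr
        exact h0mem
    have hTz : T = 0 := by rw [hT, hTset, csSup_singleton]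
    rw [hTz]
    apply div_nonneg _ hpos.le
    have hFz : (∫ x in Ω, ‖F x‖) = 0 := by simp [hres]
    rw [hFz]
    simp [le_max_right c 0]
  · -- main case
    haveI : (ae (volume.restrict Ω)).NeBot :=
      ae_neBot.mpr (fun h => hΩ0 (Measure.restrict_eq_zero.mp h))
    obtain ⟨x₀, hx₀⟩ := hM.exists
    have hM0 : 0 ≤ M := (abs_nonneg _).trans hx₀
    have hFint : Integrable F (volume.restrict Ω) := hF.integrable (by norm_num)
    have hFn : Integrable (fun x => ‖F x‖) (volume.restrict Ω) := hFint.norm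
    set S := ∫ x in Ω, ‖F x‖ with hS
    have hS0 : 0 ≤ S := integral_nonneg fun x => norm_nonneg _
    -- integrability of the two parts of the dual pairing, for any test field
    have key : ∀ Y : Euc n → Euc n, TestField Ω Y →
        Integrable (fun x => u k x * divergence Y x) (volume.restrict Ω) ∧
        Integrable (fun x => ⟪Y x, F x⟫) (volume.restrict Ω) := by
      intro Y hY
      obtain ⟨C1, hC1d⟩ := divergence_bound hY
      obtain ⟨C2, hC2b⟩ := testField_bound hY
      constructor
      · have := huint.bdd_mul (divergence_continuous hY.1).aestronglyMeasurable
          (ae_of_all _ fun x => by simpa [Real.norm_eq_abs] using hC1d x)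
        simpa [mul_comm] using this
      · refine Integrable.mono' (hFn.const_mul C2)
          ((hY.1.continuous.aestronglyMeasurable).inner hFint.1) ?_
        filter_upwards with x
        rw [Real.norm_eq_abs]
        calc |⟪Y x, F x⟫| ≤ ‖Y x‖ * ‖F x‖ := abs_real_inner_le_norm _ _
          _ ≤ C2 * ‖F x‖ := mul_le_mul_of_nonneg_right (hC2b x) (norm_nonneg _)
    -- the dual set defining `phiTV` is bounded above
    have hphibdd : ∀ s ∈ phiTVSet φ Ω F (u k), s ≤ α * T + α * S := by
      rintro s ⟨Z, hZ, hZd, rfl⟩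
      have hZb : ∀ x, ‖Z x‖ ≤ α := fun x =>
        norm_le_of_dualNorm_le_one hφ hα hβ hC1 hC3 x (Z x) (hZd x)
      obtain ⟨hint1, hint2⟩ := key Z hZ
      rw [integral_sub hint1 hint2]
      have h1 : (∫ x in Ω, u k x * divergence Z x) ≤ α * T := by
        set Z' := fun y => α⁻¹ • Z y with hZ'def
        have hZ' : TestField Ω Z' := testField_smul _ hZ
        have hZ'n : ∀ x, ‖Z' x‖ ≤ 1 := fun x => by
          rw [hZ'def]
          simp only [norm_smul, Real.norm_eq_abs, abs_of_pos (inv_pos.mpr hα)]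
          rw [← inv_mul_cancel₀ hα.ne']
          exact mul_le_mul_of_nonneg_left (hZb x) (inv_pos.mpr hα).le
        have hle : (∫ x in Ω, u k x * divergence Z' x) ≤ T :=
          le_csSup hubdd ⟨Z', hZ', hZ'n, rfl⟩
        have heq : (∫ x in Ω, u k x * divergence Z x)
            = α * ∫ x in Ω, u k x * divergence Z' x := by
          rw [← integral_const_mul]
          apply integral_congr_ae
          filter_upwards with x
          rw [hZ'def, divergence_smul α⁻¹ (hZ.1.differentiable (by simp)) x]
          field_simp
        rw [heq]
        exact mul_le_mul_of_nonneg_left hle hα.le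
      have h2 : -(∫ x in Ω, ⟪Z x, F x⟫) ≤ α * S := by
        rw [← integral_neg, hS, ← integral_const_mul]
        refine integral_mono hint2.neg (hFn.const_mul α) fun x => ?_
        calc -⟪Z x, F x⟫ ≤ |⟪Z x, F x⟫| := neg_le_abs _
          _ ≤ ‖Z x‖ * ‖F x‖ := abs_real_inner_le_norm _ _
          _ ≤ α * ‖F x‖ := mul_le_mul_of_nonneg_right (hZb x) (norm_nonneg _)
      linarith
    have hphibddA : BddAbove (phiTVSet φ Ω F (u k)) :=
      ⟨α * T + α * S, fun s hs => hphibdd s hs⟩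
    -- bound on the lower-order term via Poincaré
    have hHuint : Integrable (fun x => H x * u k x) (volume.restrict Ω) := by
      refine Integrable.mono' (huint.abs.const_mul M) (hH.1.mul huint.1) ?_
      filter_upwards [hM] with x hx
      rw [Real.norm_eq_abs, abs_mul]
      exact mul_le_mul_of_nonneg_right hx (abs_nonneg _)
    have hPo : (∫ x in Ω, |u k x|) ≤ CΩ * T := hPoincare (u k) ⟨huint, hubdd⟩ huzero
    have hHu : -(∫ x in Ω, H x * u k x) ≤ M * (CΩ * T) := by
      rw [← integral_neg]
      calc (∫ x in Ω, -(H x * u k x)) ≤ ∫ x in Ω, M * |u k x| := by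
            refine integral_mono_ae hHuint.neg (huint.abs.const_mul M) ?_
            filter_upwards [hM] with x hx
            calc -(H x * u k x) ≤ |H x * u k x| := neg_le_abs _
              _ = |H x| * |u k x| := abs_mul _ _
              _ ≤ M * |u k x| := mul_le_mul_of_nonneg_right hx (abs_nonneg _)
        _ = M * ∫ x in Ω, |u k x| := integral_const_mul _ _
        _ ≤ M * (CΩ * T) := mul_le_mul_of_nonneg_left hPo hM0
    have hphiT : phiTV φ Ω F (u k) ≤ c - ∫ x in Ω, H x * u k x := by
      have := hbd k
      linarith
    -- the main estimate: every element of `tvSet` is controlled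
    have hmain : ∀ r ∈ tvSet Ω (u k), β * r ≤ c + M * (CΩ * T) + β * S := by
      rintro r ⟨Y, hY, hYn, rfl⟩
      obtain ⟨hint1, hint2⟩ := key Y hY
      set Yβ := fun y => β • Y y with hYβdef
      have hYβ : TestField Ω Yβ := testField_smul β hY
      have hdn : ∀ x, dualNorm φ x (Yβ x) ≤ 1 := fun x => by
        refine (dualNorm_le_norm_div hβ hC3 x (Yβ x)).trans ?_
        rw [hYβdef]
        simp only [norm_smul, Real.norm_eq_abs, abs_of_pos hβ]
        rw [mul_comm, mul_div_assoc, div_self hβ.ne', mul_one]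
        exact hYn x
      have hval : (∫ x in Ω, (u k x * divergence Yβ x - ⟪Yβ x, F x⟫))
          = β * (∫ x in Ω, u k x * divergence Y x) - β * ∫ x in Ω, ⟪Y x, F x⟫ := by
        have hptw : (fun x => u k x * divergence Yβ x - ⟪Yβ x, F x⟫)
            = fun x => β * (u k x * divergence Y x) - β * ⟪Y x, F x⟫ := by
          funext x
          rw [hYβdef, divergence_smul β (hY.1.differentiable (by simp)) x,
            real_inner_smul_left]
          ring
        rw [hptw, integral_sub (hint1.const_mul β) (hint2.const_mul β),
          integral_const_mul, integral_const_mul]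
      have hmem : (∫ x in Ω, (u k x * divergence Yβ x - ⟪Yβ x, F x⟫))
          ∈ phiTVSet φ Ω F (u k) := ⟨Yβ, hYβ, hdn, rfl⟩
      have hle := le_csSup hphibddA hmem
      rw [hval] at hle
      have hYF : (∫ x in Ω, ⟪Y x, F x⟫) ≤ S := by
        rw [hS]
        refine integral_mono hint2 hFn fun x => ?_
        calc ⟪Y x, F x⟫ ≤ ‖Y x‖ * ‖F x‖ := real_inner_le_norm _ _
          _ ≤ 1 * ‖F x‖ := mul_le_mul_of_nonneg_right (hYn x) (norm_nonneg _)
          _ = ‖F x‖ := one_mul _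
      have hβYF : β * (∫ x in Ω, ⟪Y x, F x⟫) ≤ β * S :=
        mul_le_mul_of_nonneg_left hYF hβ.le
      -- hle : β * ∫ ... - β * ∫⟪Y,F⟫ ≤ phiTV ≤ c - ∫ H u
      have hle' : β * (∫ x in Ω, u k x * divergence Y x)
          - β * ∫ x in Ω, ⟪Y x, F x⟫ ≤ phiTV φ Ω F (u k) := hle
      linarith
    have hfinal : β * T ≤ c + M * (CΩ * T) + β * S := by
      have h1 : T ≤ (c + M * (CΩ * T) + β * S) / β := by
        refine csSup_le ⟨0, h0mem⟩ fun r hr => ?_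
        rw [le_div_iff₀ hβ]
        have := hmain r hr
        linarith
      rw [le_div_iff₀ hβ] at h1
      linarith
    rw [le_div_iff₀ hpos]
    have hcmax : c ≤ max c 0 := le_max_left c 0
    nlinarith [hfinal]
end
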